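/- Let f : [0,T) × [0,1] → ℝⁿ be smooth with f(t,·) regular for each t, write ∂ₜf = V + φτ with V the normal velocity and φ = ⟨∂ₜf, τ⟩, and let ψ be a smooth normal vector field along f (⟨ψ, τ⟩ ≡ 0). Then (∇ₜ∇ₛ − ∇ₛ∇ₜ)ψ = (⟨κ, V⟩ − ∂ₛφ)∇ₛψ + ⟨κ, ψ⟩∇ₛV − ⟨∇ₛV, ψ⟩κ. -/

import Mathlib

open scoped RealInnerProductSpace
open MeasureTheory

noncomputable section

abbrev En (n : ℕ) := EuclideanSpace ℝ (Fin n)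

variable {n : ℕ}

/-- Arc-length derivative along `f`. -/
def aD (f g : ℝ → En n) : ℝ → En n := fun x => ‖deriv f x‖⁻¹ • deriv g x

/-- Iterated arc-length derivative. -/
def aDIter (f : ℝ → En n) : ℕ → (ℝ → En n) → ℝ → En n
  | 0, g => g
  | k + 1, g => aD f (aDIter f k g)

/-- Unit tangent vector. -/
def tang (f : ℝ → En n) : ℝ → En n := aD f f

/-- Curvature vector. -/
def curv (f : ℝ → En n) : ℝ → En n := aD f (tang f)

/-- Normal component of the arc-length derivative of a vector field along `f`. -/
def nS (f g : ℝ → En n) : ℝ → En n :=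
  fun x => aD f g x - ⟪aD f g x, tang f x⟫ • tang f x

/-- Iterated normal arc-length derivative. -/
def nSIter (f : ℝ → En n) : ℕ → (ℝ → En n) → ℝ → En n
  | 0, g => g
  | k + 1, g => nS f (nSIter f k g)

/-- Arc-length derivative of a scalar field along `f`. -/
def aDS (f : ℝ → En n) (g : ℝ → ℝ) : ℝ → ℝ := fun x => ‖deriv f x‖⁻¹ * deriv g x

/-- Length of the curve. -/
def len (f : ℝ → En n) : ℝ := ∫ x in (0:ℝ)..1, ‖deriv f x‖

/-- Willmore–Helfrich energy. -/
def WH (lam : ℝ) (ζ : En n) (f : ℝ → En n) : ℝ :=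
  (∫ x in (0:ℝ)..1, ((1/2) * ‖curv f x‖ ^ 2 - ⟪curv f x, ζ⟫) * ‖deriv f x‖) + lam * len f

/-- Time derivative of a time dependent field. -/
def pT (g : ℝ → ℝ → En n) : ℝ → ℝ → En n := fun t x => deriv (fun s => g s x) t

/-- Normal component (w.r.t. the curve `f t`) of the time derivative. -/
def nT (f g : ℝ → ℝ → En n) : ℝ → ℝ → En n :=
  fun t x => pT g t x - ⟪pT g t x, tang (f t) x⟫ • tang (f t) x

/-- Normal arc-length derivative of a time dependent field. -/
def nSF (f g : ℝ → ℝ → En n) : ℝ → ℝ → En n := fun t => nS (f t) (g t)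

/-- Tangential component of the velocity. -/
def tanComp (f : ℝ → ℝ → En n) : ℝ → ℝ → ℝ := fun t x => ⟪pT f t x, tang (f t) x⟫

/-- Normal velocity. -/
def normVel (f : ℝ → ℝ → En n) : ℝ → ℝ → En n :=
  fun t x => pT f t x - tanComp f t x • tang (f t) x

/-- Scale invariant `Lᵖ` norm of the `i`-th normal derivative of `g` along `f`. -/
def sN (f : ℝ → En n) (p : ℝ) (i : ℕ) (g : ℝ → En n) : ℝ :=
  len f ^ ((i : ℝ) + 1 - 1/p) * (∫ x in (0:ℝ)..1, ‖nSIter f i g x‖ ^ p * ‖deriv f x‖) ^ (1/p)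

/-- Scale invariant Sobolev-type norm. -/
def sNk (f : ℝ → En n) (k : ℕ) (g : ℝ → En n) : ℝ :=
  ∑ i ∈ Finset.range (k + 1), sN f 2 i g


/-! Write `P` for the projection onto the normal space of the curve, so that `∇ₛ = P ∂ₛ` and
`∇ₜ = P ∂ₜ`. Differentiating a normal field `P w` gives `P ∂(P w) = P ∂w - ⟪w, τ⟫ P ∂τ`. Since
`∂ₛ = |∂ₓf|⁻¹ ∂ₓ`, the mixed derivatives `∂ₜ∂ₓψ = ∂ₓ∂ₜψ` cancel in the commutator, which is then
made of the derivatives of the frame alone: `∂ₜ |∂ₓf|⁻¹ = (⟪κ, V⟫ - ∂ₛφ) |∂ₓf|⁻¹`,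
`∂ₜτ = ∇ₛV + φκ` and `∂ₛτ = κ`, paired with `⟪∂ψ, τ⟫ = -⟪ψ, ∂τ⟫` from the normality of `ψ`.
The two `φκ` terms cancel. -/

section NormalProjection

variable {E : Type*} [NormedAddCommGroup E] [InnerProductSpace ℝ E]

def normalProj (u : E) : E →ₗ[ℝ] E where
  toFun w := w - ⟪w, u⟫ • u
  map_add' v w := by rw [inner_add_left, add_smul]; abel
  map_smul' c w := by rw [real_inner_smul_left, smul_sub, mul_smul]; rfl

theorem normalProj_apply (u w : E) : normalProj u w = w - ⟪w, u⟫ • u := rfl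

variable {u : E}

theorem inner_normalProj_self (hu : ‖u‖ = 1) (w : E) : ⟪normalProj u w, u⟫ = 0 := by
  rw [normalProj_apply, inner_sub_left, real_inner_smul_left, real_inner_self_eq_norm_sq, hu]
  ring

theorem normalProj_of_inner_eq_zero {w : E} (hw : ⟪w, u⟫ = 0) : normalProj u w = w := by
  rw [normalProj_apply, hw, zero_smul, sub_zero]

theorem normalProj_self (hu : ‖u‖ = 1) : normalProj u u = 0 := by
  rw [normalProj_apply, real_inner_self_eq_norm_sq, hu, one_pow, one_smul, sub_self]

theorem hasDerivAt_normalProj {u w : ℝ → E} {u' w' : E} {y : ℝ}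
    (hu : HasDerivAt u u' y) (hw : HasDerivAt w w' y) :
    HasDerivAt (fun z => normalProj (u z) (w z))
      (w' - (⟪w y, u'⟫ + ⟪w', u y⟫) • u y - ⟪w y, u y⟫ • u') y := by
  refine (hw.sub ((hw.inner ℝ hu).smul hu)).congr_deriv ?_
  rw [add_smul]
  abel

theorem normalProj_deriv_normalProj {u w : ℝ → E} {u' w' : E} {y : ℝ}
    (hu : HasDerivAt u u' y) (hw : HasDerivAt w w' y) (hu1 : ‖u y‖ = 1) :
    normalProj (u y) (deriv (fun z => normalProj (u z) (w z)) y)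
      = normalProj (u y) w' - ⟪w y, u y⟫ • normalProj (u y) u' := by
  rw [(hasDerivAt_normalProj hu hw).deriv, map_sub, map_sub, map_smul, map_smul,
    normalProj_self hu1, smul_zero, sub_zero]

theorem inner_eq_neg_of_eventually_inner_eq_zero {u w : ℝ → E} {u' w' : E} {y : ℝ}
    (hu : HasDerivAt u u' y) (hw : HasDerivAt w w' y)
    (h : ∀ᶠ z in nhds y, ⟪w z, u z⟫ = 0) : ⟪w', u y⟫ = -⟪w y, u'⟫ := by
  have h0 : HasDerivAt (fun z => ⟪w z, u z⟫) 0 y :=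
    (hasDerivAt_const y (0 : ℝ)).congr_of_eventuallyEq h
  have := (hw.inner ℝ hu).unique h0
  linarith

theorem HasDerivAt.norm {a : ℝ → E} {a' : E} {y : ℝ} (ha : HasDerivAt a a' y) (h0 : a y ≠ 0) :
    HasDerivAt (fun z => ‖a z‖) (⟪a y, a'⟫ / ‖a y‖) y := by
  have hd := (ha.differentiableAt.norm ℝ h0).hasDerivAt
  have hsq := (hd.pow 2).unique ha.norm_sq
  have hpos : 0 < ‖a y‖ := norm_pos_iff.2 h0
  refine hd.congr_deriv ?_
  rw [eq_div_iff hpos.ne']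
  norm_num at hsq
  linarith

theorem HasDerivAt.inv_norm_smul {a : ℝ → E} {a' : E} {y : ℝ} (ha : HasDerivAt a a' y)
    (h0 : a y ≠ 0) :
    HasDerivAt (fun z => ‖a z‖⁻¹ • a z) (‖a y‖⁻¹ • normalProj (‖a y‖⁻¹ • a y) a') y := by
  have hv : ‖a y‖ ≠ 0 := norm_ne_zero_iff.2 h0
  refine (((ha.norm h0).inv hv).smul ha).congr_deriv ?_
  rw [normalProj_apply, real_inner_smul_right, real_inner_comm a' (a y)]
  simp only [Pi.inv_apply]
  match_scalars <;> field_simp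

end NormalProjection

section PartialDeriv

variable {E : Type*} [NormedAddCommGroup E] [NormedSpace ℝ E]

theorem HasFDerivAt.hasDerivAt_partial_fst {Φ : ℝ × ℝ → E} {Φ' : ℝ × ℝ →L[ℝ] E} {t x : ℝ}
    (h : HasFDerivAt Φ Φ' (t, x)) : HasDerivAt (fun s => Φ (s, x)) (Φ' (1, 0)) t :=
  h.comp_hasDerivAt t ((hasDerivAt_id t).prodMk (hasDerivAt_const t x))

theorem HasFDerivAt.hasDerivAt_partial_snd {Φ : ℝ × ℝ → E} {Φ' : ℝ × ℝ →L[ℝ] E} {t x : ℝ}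
    (h : HasFDerivAt Φ Φ' (t, x)) : HasDerivAt (fun y => Φ (t, y)) (Φ' (0, 1)) x :=
  h.comp_hasDerivAt x ((hasDerivAt_const x t).prodMk (hasDerivAt_id x))

variable {g : ℝ → ℝ → E}

theorem hasDerivAt_uncurry_left (hg : Differentiable ℝ (Function.uncurry g))
    (t x : ℝ) : HasDerivAt (fun s => g s x) (deriv (fun s => g s x) t) t :=
  (hg (t, x)).hasFDerivAt.hasDerivAt_partial_fst.differentiableAt.hasDerivAt

theorem hasDerivAt_uncurry_right (hg : Differentiable ℝ (Function.uncurry g))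
    (t x : ℝ) : HasDerivAt (g t) (deriv (g t) x) x :=
  (hg (t, x)).hasFDerivAt.hasDerivAt_partial_snd.differentiableAt.hasDerivAt

theorem ContDiff.uncurry_deriv_left {k : WithTop ℕ∞}
    (hg : ContDiff ℝ (k + 1) (Function.uncurry g)) :
    ContDiff ℝ k (Function.uncurry fun t x => deriv (fun s => g s x) t) := by
  have hd : Differentiable ℝ (Function.uncurry g) := hg.differentiable (by simp)
  have : (Function.uncurry fun t x => deriv (fun s => g s x) t)
      = fun p => fderiv ℝ (Function.uncurry g) p (1, 0) :=
    funext fun p => (hd p).hasFDerivAt.hasDerivAt_partial_fst.deriv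
  rw [this]
  exact (ContinuousLinearMap.apply ℝ E ((1 : ℝ), (0 : ℝ))).contDiff.comp (hg.fderiv_right le_rfl)

theorem ContDiff.uncurry_deriv_right {k : WithTop ℕ∞}
    (hg : ContDiff ℝ (k + 1) (Function.uncurry g)) :
    ContDiff ℝ k (Function.uncurry fun t => deriv (g t)) := by
  have hd : Differentiable ℝ (Function.uncurry g) := hg.differentiable (by simp)
  have : (Function.uncurry fun t => deriv (g t))
      = fun p => fderiv ℝ (Function.uncurry g) p (0, 1) :=
    funext fun p => (hd p).hasFDerivAt.hasDerivAt_partial_snd.deriv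
  rw [this]
  exact (ContinuousLinearMap.apply ℝ E ((0 : ℝ), (1 : ℝ))).contDiff.comp (hg.fderiv_right le_rfl)

theorem deriv_deriv_uncurry_comm (hg : ContDiff ℝ 2 (Function.uncurry g)) (t x : ℝ) :
    deriv (fun s => deriv (g s) x) t = deriv (fun y => deriv (fun s => g s y) t) x := by
  set F := Function.uncurry g
  have hF : Differentiable ℝ F := hg.differentiable (by norm_num)
  have hF' : Differentiable ℝ (fderiv ℝ F) :=
    (hg.fderiv_right (m := 1) (by norm_num)).differentiable one_ne_zero
  have hdir (w : ℝ × ℝ) : HasFDerivAt (fun q => fderiv ℝ F q w)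
      ((ContinuousLinearMap.apply ℝ E w).comp (fderiv ℝ (fderiv ℝ F) (t, x))) (t, x) :=
    (ContinuousLinearMap.apply ℝ E w).hasFDerivAt.comp (t, x) (hF' (t, x)).hasFDerivAt
  have hl : (fun s => deriv (g s) x) = fun s => fderiv ℝ F (s, x) (0, 1) :=
    funext fun s => (hF (s, x)).hasFDerivAt.hasDerivAt_partial_snd.deriv
  have hr : (fun y => deriv (fun s => g s y) t) = fun y => fderiv ℝ F (t, y) (1, 0) :=
    funext fun y => (hF (t, y)).hasFDerivAt.hasDerivAt_partial_fst.deriv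
  rw [hl, hr, (hdir _).hasDerivAt_partial_fst.deriv, (hdir _).hasDerivAt_partial_snd.deriv]
  exact (hg.contDiffAt.isSymmSndFDerivAt (by simp)) _ _

end PartialDeriv

section Curve

variable {γ : ℝ → En n} {x : ℝ}

theorem norm_tang (ha : deriv γ x ≠ 0) : ‖tang γ x‖ = 1 := by
  simp [tang, aD, norm_smul, ha]

theorem inner_nS_tang (ha : deriv γ x ≠ 0) (g : ℝ → En n) : ⟪nS γ g x, tang γ x⟫ = 0 :=
  inner_normalProj_self (norm_tang ha) _

variable (hγ : DifferentiableAt ℝ (deriv γ) x) (ha : deriv γ x ≠ 0)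
include hγ ha

theorem hasDerivAt_tang : HasDerivAt (tang γ) (‖deriv γ x‖ • curv γ x) x := by
  have h := hγ.hasDerivAt.inv_norm_smul ha
  refine h.congr_deriv ?_
  show _ = ‖deriv γ x‖ • ‖deriv γ x‖⁻¹ • deriv (fun z => ‖deriv γ z‖⁻¹ • deriv γ z) x
  rw [h.deriv, smul_inv_smul₀ (norm_ne_zero_iff.2 ha)]

theorem inner_curv_tang : ⟪curv γ x, tang γ x⟫ = 0 := by
  show ⟪‖deriv γ x‖⁻¹ • deriv (fun z => ‖deriv γ z‖⁻¹ • deriv γ z) x, tang γ x⟫ = 0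
  rw [(hγ.hasDerivAt.inv_norm_smul ha).deriv, real_inner_smul_left, real_inner_smul_left]
  exact mul_eq_zero_of_right _ (mul_eq_zero_of_right _ (inner_normalProj_self (norm_tang ha) _))

theorem normalProj_curv : normalProj (tang γ x) (curv γ x) = curv γ x :=
  normalProj_of_inner_eq_zero (inner_curv_tang hγ ha)

theorem inner_aD_tang_of_eventually_normal {w : ℝ → En n} (hw : DifferentiableAt ℝ w x)
    (hnormal : ∀ᶠ z in nhds x, ⟪w z, tang γ z⟫ = 0) :
    ⟪aD γ w x, tang γ x⟫ = -⟪w x, curv γ x⟫ := by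
  have h := inner_eq_neg_of_eventually_inner_eq_zero (hasDerivAt_tang hγ ha) hw.hasDerivAt hnormal
  rw [aD, real_inner_smul_left, h, real_inner_smul_right]
  field_simp [norm_ne_zero_iff.2 ha]

end Curve

section Flow

variable {f : ℝ → ℝ → En n} {t x : ℝ}

section FixedTime

variable (hfx : DifferentiableAt ℝ (deriv (f t)) x) (hb : DifferentiableAt ℝ (pT f t) x)
  (ha : deriv (f t) x ≠ 0)
include hfx hb ha

theorem hasDerivAt_tanComp :
    HasDerivAt (tanComp f t)
      (⟪deriv (pT f t) x, tang (f t) x⟫ + ‖deriv (f t) x‖ * ⟪pT f t x, curv (f t) x⟫) x := by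
  refine (hb.hasDerivAt.inner ℝ (hasDerivAt_tang hfx ha)).congr_deriv ?_
  rw [real_inner_smul_right]
  ring

theorem nS_normVel :
    nS (f t) (normVel f t) x
      = ‖deriv (f t) x‖⁻¹ • normalProj (tang (f t) x) (deriv (pT f t) x)
        - tanComp f t x • curv (f t) x := by
  have hV : HasDerivAt (normVel f t) _ x :=
    hb.hasDerivAt.sub ((hasDerivAt_tanComp hfx hb ha).smul (hasDerivAt_tang hfx ha))
  show normalProj (tang (f t) x) (‖deriv (f t) x‖⁻¹ • deriv (normVel f t) x) = _
  simp only [hV.deriv, map_smul, map_sub, map_add, normalProj_self (norm_tang ha),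
    normalProj_curv hfx ha, smul_zero, add_zero]
  match_scalars <;> field_simp [norm_ne_zero_iff.2 ha]

end FixedTime

variable (hf : ContDiff ℝ 2 (Function.uncurry f))
include hf

theorem differentiableAt_deriv_right : DifferentiableAt ℝ (deriv (f t)) x :=
  (hasDerivAt_uncurry_right ((hf.uncurry_deriv_right (k := 1)).differentiable one_ne_zero)
    t x).differentiableAt

theorem differentiableAt_pT_right : DifferentiableAt ℝ (pT f t) x :=
  (hasDerivAt_uncurry_right ((hf.uncurry_deriv_left (k := 1)).differentiable one_ne_zero)
    t x).differentiableAt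

theorem hasDerivAt_deriv_left :
    HasDerivAt (fun s => deriv (f s) x) (pT (fun s => deriv (f s)) t x) t :=
  hasDerivAt_uncurry_left ((hf.uncurry_deriv_right (k := 1)).differentiable one_ne_zero) t x

theorem pT_deriv_comm : pT (fun s => deriv (f s)) t x = deriv (pT f t) x :=
  deriv_deriv_uncurry_comm hf t x

variable (ha : deriv (f t) x ≠ 0)
include ha

/-- The evolution of the unit tangent: `∂ₜτ = ∇ₛV + φκ`. -/
theorem hasDerivAt_tang_left :
    HasDerivAt (fun s => tang (f s) x)
      (nS (f t) (normVel f t) x + tanComp f t x • curv (f t) x) t := by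
  refine ((hasDerivAt_deriv_left hf).inv_norm_smul ha).congr_deriv ?_
  rw [nS_normVel (differentiableAt_deriv_right hf) (differentiableAt_pT_right hf) ha,
    pT_deriv_comm hf, sub_add_cancel]
  rfl

/-- The evolution of the arc-length element: `∂ₜ(ds) = (∂ₛφ - ⟪κ, V⟫) ds`. -/
theorem hasDerivAt_inv_norm_deriv_left :
    HasDerivAt (fun s => ‖deriv (f s) x‖⁻¹)
      (‖deriv (f t) x‖⁻¹
        * (⟪curv (f t) x, normVel f t x⟫ - aDS (f t) (tanComp f t) x)) t := by
  have hv : ‖deriv (f t) x‖ ≠ 0 := norm_ne_zero_iff.2 ha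
  refine (((hasDerivAt_deriv_left hf).norm ha).inv hv).congr_deriv ?_
  have hφ := hasDerivAt_tanComp (differentiableAt_deriv_right hf) (differentiableAt_pT_right hf) ha
  rw [aDS, hφ.deriv, normVel, inner_sub_right, real_inner_smul_right,
    inner_curv_tang (differentiableAt_deriv_right hf) ha, pT_deriv_comm hf,
    show tang (f t) x = ‖deriv (f t) x‖⁻¹ • deriv (f t) x from rfl, real_inner_smul_right,
    real_inner_comm (deriv (f t) x), real_inner_comm (curv (f t) x)]
  field_simp
  ring

end Flow

section Commutator

variable {f ψ : ℝ → ℝ → En n} {t x : ℝ}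
  (hf : ContDiff ℝ 2 (Function.uncurry f)) (hψ : ContDiff ℝ 2 (Function.uncurry ψ))
  (ha : deriv (f t) x ≠ 0)
include hf hψ ha

theorem nT_nSF :
    nT f (nSF f ψ) t x
      = (⟪curv (f t) x, normVel f t x⟫ - aDS (f t) (tanComp f t) x) • nSF f ψ t x
        + ‖deriv (f t) x‖⁻¹ • normalProj (tang (f t) x) (pT (fun s => deriv (ψ s)) t x)
        - ⟪aD (f t) (ψ t) x, tang (f t) x⟫
          • (nS (f t) (normVel f t) x + tanComp f t x • curv (f t) x) := by
  have hw : HasDerivAt (fun s => ‖deriv (f s) x‖⁻¹ • deriv (ψ s) x) _ t :=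
    (hasDerivAt_inv_norm_deriv_left hf ha).smul (hasDerivAt_deriv_left (x := x) hψ)
  have hτ := hasDerivAt_tang_left hf ha
  have hnormal : ⟪nS (f t) (normVel f t) x + tanComp f t x • curv (f t) x, tang (f t) x⟫ = 0 := by
    rw [inner_add_left, real_inner_smul_left, inner_nS_tang ha,
      inner_curv_tang (differentiableAt_deriv_right hf) ha, mul_zero, add_zero]
  show normalProj (tang (f t) x) (deriv (fun s => normalProj (tang (f s) x)
    (‖deriv (f s) x‖⁻¹ • deriv (ψ s) x)) t) = _
  rw [normalProj_deriv_normalProj hτ hw (norm_tang ha), normalProj_of_inner_eq_zero hnormal,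
    show nSF f ψ t x = ‖deriv (f t) x‖⁻¹ • normalProj (tang (f t) x) (deriv (ψ t) x) from
      map_smul (normalProj (tang (f t) x)) _ _,
    show aD (f t) (ψ t) x = ‖deriv (f t) x‖⁻¹ • deriv (ψ t) x from rfl, map_add, map_smul, map_smul]
  module

theorem nSF_nT :
    nSF f (nT f ψ) t x
      = ‖deriv (f t) x‖⁻¹ • normalProj (tang (f t) x) (deriv (pT ψ t) x)
        - ⟪pT ψ t x, tang (f t) x⟫ • curv (f t) x := by
  have hfx : DifferentiableAt ℝ (deriv (f t)) x := differentiableAt_deriv_right hf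
  show normalProj (tang (f t) x)
    (‖deriv (f t) x‖⁻¹ • deriv (fun y => normalProj (tang (f t) y) (pT ψ t y)) x) = _
  rw [map_smul, normalProj_deriv_normalProj (hasDerivAt_tang hfx ha)
    (differentiableAt_pT_right hψ).hasDerivAt (norm_tang ha), map_smul, normalProj_curv hfx ha]
  match_scalars <;> field_simp [norm_ne_zero_iff.2 ha]

end Commutator

theorem commutator_nabla_t_nabla_s_general (n : ℕ)
    (T : ℝ)
    (f : ℝ → ℝ → En n)
    (hsmooth : ContDiff ℝ (⊤ : ℕ∞) (Function.uncurry f))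
    (hreg : ∀ t ∈ Set.Ico (0:ℝ) T, ∀ x ∈ Set.Icc (0:ℝ) 1, deriv (f t) x ≠ 0)
    (ψ : ℝ → ℝ → En n)
    (hψsmooth : ContDiff ℝ (⊤ : ℕ∞) (Function.uncurry ψ))
    (hψnormal : ∀ t ∈ Set.Ico (0:ℝ) T, ∀ x ∈ Set.Icc (0:ℝ) 1,
      ⟪ψ t x, tang (f t) x⟫ = 0) :
    ∀ t ∈ Set.Ioo (0:ℝ) T, ∀ x ∈ Set.Ioo (0:ℝ) 1,
      nT f (nSF f ψ) t x - nSF f (nT f ψ) t x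
        = (⟪curv (f t) x, normVel f t x⟫ - aDS (f t) (tanComp f t) x) • nSF f ψ t x
          + ⟪curv (f t) x, ψ t x⟫ • nS (f t) (normVel f t) x
          - ⟪nS (f t) (normVel f t) x, ψ t x⟫ • curv (f t) x := by
  intro t ht x hx
  have hf : ContDiff ℝ 2 (Function.uncurry f) := hsmooth.of_le (by norm_cast)
  have hψ : ContDiff ℝ 2 (Function.uncurry ψ) := hψsmooth.of_le (by norm_cast)
  have ha : deriv (f t) x ≠ 0 := hreg t (Set.Ioo_subset_Ico_self ht) x (Set.Ioo_subset_Icc_self hx)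
  have hψ₁ : Differentiable ℝ (Function.uncurry ψ) := hψ.differentiable (by norm_num)
  have hψx : ⟪aD (f t) (ψ t) x, tang (f t) x⟫ = -⟪ψ t x, curv (f t) x⟫ := by
    refine inner_aD_tang_of_eventually_normal (differentiableAt_deriv_right hf) ha
      (hasDerivAt_uncurry_right hψ₁ t x).differentiableAt ?_
    filter_upwards [Ioo_mem_nhds hx.1 hx.2] with y hy
    exact hψnormal t (Set.Ioo_subset_Ico_self ht) y (Set.Ioo_subset_Icc_self hy)
  have hψt : ⟪pT ψ t x, tang (f t) x⟫
      = -⟪ψ t x, nS (f t) (normVel f t) x + tanComp f t x • curv (f t) x⟫ := by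
    have hnormal : ∀ᶠ s in nhds t, ⟪ψ s x, tang (f s) x⟫ = 0 := by
      filter_upwards [Ioo_mem_nhds ht.1 ht.2] with s hs
      exact hψnormal s (Set.Ioo_subset_Ico_self hs) x (Set.Ioo_subset_Icc_self hx)
    exact (inner_eq_neg_of_eventually_inner_eq_zero (hasDerivAt_tang_left hf ha)
      (hasDerivAt_uncurry_left hψ₁ t x) hnormal :)
  rw [nT_nSF hf hψ ha, nSF_nT hf hψ ha, pT_deriv_comm hψ, hψx, hψt]
  simp only [inner_add_right, real_inner_smul_right, real_inner_comm (ψ t x)]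
  module

/-- Commutator of `∇ₜ` and `∇ₛ` on a normal vector field `ψ` along the flow
`∂ₜf = V + φτ`:
`(∇ₜ∇ₛ - ∇ₛ∇ₜ)ψ = (⟨κ,V⟩ - ∂ₛφ)∇ₛψ + ⟨κ,ψ⟩∇ₛV - ⟨∇ₛV,ψ⟩κ`. -/
theorem commutator_nabla_t_nabla_s (n : ℕ) (hn : 2 ≤ n)
    (T : ℝ) (hT : 0 < T)
    (f : ℝ → ℝ → En n)
    (hsmooth : ContDiff ℝ (⊤ : ℕ∞) (Function.uncurry f))
    (hreg : ∀ t ∈ Set.Ico (0:ℝ) T, ∀ x ∈ Set.Icc (0:ℝ) 1, deriv (f t) x ≠ 0)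
    (ψ : ℝ → ℝ → En n)
    (hψsmooth : ContDiff ℝ (⊤ : ℕ∞) (Function.uncurry ψ))
    (hψnormal : ∀ t ∈ Set.Ico (0:ℝ) T, ∀ x ∈ Set.Icc (0:ℝ) 1,
      ⟪ψ t x, tang (f t) x⟫ = 0) :
    ∀ t ∈ Set.Ioo (0:ℝ) T, ∀ x ∈ Set.Ioo (0:ℝ) 1,
      nT f (nSF f ψ) t x - nSF f (nT f ψ) t x
        = (⟪curv (f t) x, normVel f t x⟫ - aDS (f t) (tanComp f t) x) • nSF f ψ t x
          + ⟪curv (f t) x, ψ t x⟫ • nS (f t) (normVel f t) x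
          - ⟪nS (f t) (normVel f t) x, ψ t x⟫ • curv (f t) x :=
  commutator_nabla_t_nabla_s_general n T f hsmooth hreg ψ hψsmooth hψnormal
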